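/- Let S be an almost bisectorial operator on X (so that 0 ∈ ρ(S), S satisfies condition (H) with some constants h, M, and the operators A_±, B_± and P_± = S²A_± are defined). Then P_± = SB_±, i.e. D(P_±) = {x ∈ X : B_±x ∈ D(S)} and P_±x = SB_±x; in particular D(S) ⊆ D(P₊) ∩ D(P₋) and, for every x ∈ D(S), P_±x = ±(2πi)⁻¹ ∫_{Re λ = ±h} λ⁻¹ (S − λ)⁻¹ Sx dλ, i.e. P_±x = ±(2π)⁻¹ ∫_ℝ (±h + it)⁻¹ (S − (±h + it))⁻¹ Sx dt for h > 0 sufficiently small. -/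

import Mathlib

/-!
For `λ` on the line `Re λ = ±h` one has `S (λ⁻² (S - λ)⁻¹ x) = λ⁻² x + λ⁻¹ (S - λ)⁻¹ x`, and
`∫ λ⁻² dλ = 0` along a vertical line avoiding `0`. Integrating therefore gives `S A_± x = B_± x`,
which is exactly `S² A_± = S B_±`. For `x ∈ D(S)` the resolvent commutes with `S`, so integrating
`S (λ⁻¹ (S - λ)⁻¹ x) = λ⁻¹ (S - λ)⁻¹ S x` gives `S B_± x` as the stated integral. In both cases `S`
may be taken inside the integral because `0 ∈ ρ(S)`. The integrals converge absolutely since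
the resolvent is bounded on the strip `|Re λ| ≤ h` and, by the resolvent identity with `i Im λ`,
decays there like `|Im λ|^(-β)`.
-/

open Complex MeasureTheory Set Filter

noncomputable section

variable {E : Type*} [NormedAddCommGroup E] [NormedSpace ℂ E]

/-- `R : E →L[ℂ] E` is the (everywhere defined, bounded) inverse of `S - lam`. -/
def IsResolventAt (S : E →ₗ.[ℂ] E) (lam : ℂ) (R : E →L[ℂ] E) : Prop :=
  (∀ x, R x ∈ S.domain) ∧
  (∀ x : S.domain, R (S x - lam • (x : E)) = (x : E)) ∧
  (∀ (x : E) (hx : R x ∈ S.domain), S ⟨R x, hx⟩ - lam • R x = x)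

/-- The resolvent set of the (possibly unbounded, not densely defined) operator `S`. -/
def resolvSet (S : E →ₗ.[ℂ] E) : Set ℂ := {lam | ∃ R, IsResolventAt S lam R}

/-- The spectrum of `S`. -/
def pSpectrum (S : E →ₗ.[ℂ] E) : Set ℂ := (resolvSet S)ᶜ

-- The resolvent `(S - lam)⁻¹` of `S` at `lam` (junk value `0` if `lam ∉ ρ(S)`).
open Classical in
def res (S : E →ₗ.[ℂ] E) (lam : ℂ) : E →L[ℂ] E :=
  if h : ∃ R, IsResolventAt S lam R then h.choose else 0

/-- Condition (H): the strip `|Re lam| ≤ h` consists of resolvent points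
and the resolvent is bounded by `M` there. -/
def CondH (S : E →ₗ.[ℂ] E) (h M : ℝ) : Prop :=
  0 < h ∧ ∀ lam : ℂ, |lam.re| ≤ h → lam ∈ resolvSet S ∧ ‖res S lam‖ ≤ M

/-- The set of `x` such that the local resolvent `lam ↦ (S - lam)⁻¹ x` has a bounded analytic
extension to (a neighbourhood of) `H`; it is a linear subspace of `E`. -/
def Gsub (S : E →ₗ.[ℂ] E) (H : Set ℂ) : Submodule ℂ E where
  carrier := {x | ∃ φ : ℂ → E,
    (∃ U, IsOpen U ∧ H ⊆ U ∧ DifferentiableOn ℂ φ U) ∧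
    (∃ C : ℝ, ∀ z ∈ H, ‖φ z‖ ≤ C) ∧
    (∀ t : ℝ, φ ((t : ℂ) * Complex.I) = res S ((t : ℂ) * Complex.I) x)}
  zero_mem' := ⟨0, ⟨univ, isOpen_univ, subset_univ _, differentiableOn_const 0⟩,
    ⟨0, fun z _ => by simp⟩, fun t => by simp⟩
  add_mem' := by
    rintro a b ⟨φ, ⟨U, hU, hHU, hdU⟩, ⟨C, hC⟩, hφ⟩ ⟨ψ, ⟨V, hV, hHV, hdV⟩, ⟨D, hD⟩, hψ⟩
    refine ⟨φ + ψ, ⟨U ∩ V, hU.inter hV, subset_inter hHU hHV,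
      ((hdU.mono inter_subset_left).add (hdV.mono inter_subset_right))⟩,
      ⟨C + D, fun z hz => (norm_add_le _ _).trans (add_le_add (hC z hz) (hD z hz))⟩,
      fun t => by simp [hφ t, hψ t]⟩
  smul_mem' := by
    rintro c a ⟨φ, ⟨U, hU, hHU, hdU⟩, ⟨C, hC⟩, hφ⟩
    refine ⟨c • φ, ⟨U, hU, hHU, hdU.const_smul c⟩,
      ⟨‖c‖ * C, fun z hz => by
        rw [Pi.smul_apply, norm_smul]
        exact mul_le_mul_of_nonneg_left (hC z hz) (norm_nonneg c)⟩,
      fun t => by simp [hφ t]⟩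

/-- The subspace `G₊` of `x` whose local resolvent extends boundedly and analytically
to the closed left half plane. -/
def Gp (S : E →ₗ.[ℂ] E) : Submodule ℂ E := Gsub S {z : ℂ | z.re ≤ 0}

/-- The subspace `G₋` of `x` whose local resolvent extends boundedly and analytically
to the closed right half plane. -/
def Gm (S : E →ₗ.[ℂ] E) : Submodule ℂ E := Gsub S {z : ℂ | 0 ≤ z.re}

/-- The part of the operator `S` in the subspace `Y`: the restriction of `S` to
`{x ∈ D(S) ∩ Y : S x ∈ Y}`, regarded as an operator in `Y`. If `Y` is `S`-invariant
this is the restriction `S|Y`. -/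
def partIn (S : E →ₗ.[ℂ] E) (Y : Submodule ℂ E) : ↥Y →ₗ.[ℂ] ↥Y :=
  Submodule.toLinearPMap (S.graph.comap (Y.subtype.prodMap Y.subtype))

/-- `x ∈ D(S²)`. -/
def memD2 (S : E →ₗ.[ℂ] E) (x : E) : Prop :=
  ∃ h : x ∈ S.domain, S ⟨x, h⟩ ∈ S.domain

-- `S² x` (junk value `0` if `x ∉ D(S²)`).
open Classical in
def sqApply (S : E →ₗ.[ℂ] E) (x : E) : E :=
  if h : memD2 S x then S ⟨S ⟨x, h.choose⟩, h.choose_spec⟩ else 0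

/-- `S` is dichotomous with respect to the decomposition `E = Xp ⊕ Xm`. -/
structure IsDichotomousWrt (S : E →ₗ.[ℂ] E) (Xp Xm : Submodule ℂ E) : Prop where
  closed_p : IsClosed (Xp : Set E)
  closed_m : IsClosed (Xm : Set E)
  compl : IsCompl Xp Xm
  imag : ∀ t : ℝ, (t : ℂ) * Complex.I ∈ resolvSet S
  inv_p : ∀ x : S.domain, (x : E) ∈ Xp → S x ∈ Xp
  inv_m : ∀ x : S.domain, (x : E) ∈ Xm → S x ∈ Xm
  spec_p : pSpectrum (partIn S Xp) ⊆ {lam : ℂ | 0 < lam.re}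
  spec_m : pSpectrum (partIn S Xm) ⊆ {lam : ℂ | lam.re < 0}

/-- `S` is strictly dichotomous with respect to the decomposition `E = Xp ⊕ Xm`. -/
structure IsStrictlyDichotomousWrt (S : E →ₗ.[ℂ] E) (Xp Xm : Submodule ℂ E)
    extends IsDichotomousWrt S Xp Xm : Prop where
  bnd_p : ∃ M : ℝ, ∀ lam : ℂ, lam.re ≤ 0 →
    lam ∈ resolvSet (partIn S Xp) ∧ ‖res (partIn S Xp) lam‖ ≤ M
  bnd_m : ∃ M : ℝ, ∀ lam : ℂ, 0 ≤ lam.re →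
    lam ∈ resolvSet (partIn S Xm) ∧ ‖res (partIn S Xm) lam‖ ≤ M

/-- `S` is strictly dichotomous (w.r.t. some decomposition). -/
def IsStrictlyDichotomous (S : E →ₗ.[ℂ] E) : Prop :=
  ∃ Xp Xm : Submodule ℂ E, IsStrictlyDichotomousWrt S Xp Xm

/-- `S` is bisectorial with constant `M`. -/
def Bisectorial (S : E →ₗ.[ℂ] E) (M : ℝ) : Prop :=
  0 < M ∧ ∀ lam : ℂ, lam.re = 0 → lam ≠ 0 →
    lam ∈ resolvSet S ∧ ‖res S lam‖ ≤ M / ‖lam‖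

/-- `S` is almost bisectorial with constants `M` and exponent `β`. -/
def AlmostBisectorial (S : E →ₗ.[ℂ] E) (M β : ℝ) : Prop :=
  0 < M ∧ 0 < β ∧ β < 1 ∧ ∀ lam : ℂ, lam.re = 0 → lam ≠ 0 →
    lam ∈ resolvSet S ∧ ‖res S lam‖ ≤ M / ‖lam‖ ^ β

/-- The operator `A₊ = (2πi)⁻¹ ∫_{Re lam = h} lam⁻² (S-lam)⁻¹ dlam`. -/
def Aplus (S : E →ₗ.[ℂ] E) (h : ℝ) : E →L[ℂ] E :=
  (2 * (Real.pi : ℂ))⁻¹ •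
    ∫ t : ℝ, (((h : ℂ) + (t : ℂ) * Complex.I) ^ 2)⁻¹ • res S ((h : ℂ) + (t : ℂ) * Complex.I)

/-- The operator `A₋ = -(2πi)⁻¹ ∫_{Re lam = -h} lam⁻² (S-lam)⁻¹ dlam`. -/
def Aminus (S : E →ₗ.[ℂ] E) (h : ℝ) : E →L[ℂ] E :=
  -(2 * (Real.pi : ℂ))⁻¹ •
    ∫ t : ℝ, ((-(h : ℂ) + (t : ℂ) * Complex.I) ^ 2)⁻¹ • res S (-(h : ℂ) + (t : ℂ) * Complex.I)

/-- The operator `B₊ = (2πi)⁻¹ ∫_{Re lam = h} lam⁻¹ (S-lam)⁻¹ dlam`. -/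
def Bplus (S : E →ₗ.[ℂ] E) (h : ℝ) : E →L[ℂ] E :=
  (2 * (Real.pi : ℂ))⁻¹ •
    ∫ t : ℝ, ((h : ℂ) + (t : ℂ) * Complex.I)⁻¹ • res S ((h : ℂ) + (t : ℂ) * Complex.I)

/-- The operator `B₋ = -(2πi)⁻¹ ∫_{Re lam = -h} lam⁻¹ (S-lam)⁻¹ dlam`. -/
def Bminus (S : E →ₗ.[ℂ] E) (h : ℝ) : E →L[ℂ] E :=
  -(2 * (Real.pi : ℂ))⁻¹ •
    ∫ t : ℝ, (-(h : ℂ) + (t : ℂ) * Complex.I)⁻¹ • res S (-(h : ℂ) + (t : ℂ) * Complex.I)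

/-- `M₊`, the closure of the range of `A₊`. -/
def Msubp (S : E →ₗ.[ℂ] E) (h : ℝ) : Submodule ℂ E :=
  (LinearMap.range ((Aplus S h) : E →ₗ[ℂ] E)).topologicalClosure

/-- `M₋`, the closure of the range of `A₋`. -/
def Msubm (S : E →ₗ.[ℂ] E) (h : ℝ) : Submodule ℂ E :=
  (LinearMap.range ((Aminus S h) : E →ₗ[ℂ] E)).topologicalClosure


variable {X : Type*} [NormedAddCommGroup X] [NormedSpace ℂ X] [CompleteSpace X]

open Asymptotics

section Resolvent

variable {S : E →ₗ.[ℂ] E} {lam mu : ℂ}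

theorem isResolventAt_res (hlam : lam ∈ resolvSet S) : IsResolventAt S lam (res S lam) := by
  have h : ∃ R, IsResolventAt S lam R := hlam
  rw [res, dif_pos h]
  exact h.choose_spec

theorem res_mem_graph (hlam : lam ∈ resolvSet S) (x : E) :
    (res S lam x, x + lam • res S lam x) ∈ S.graph := by
  have hx := (isResolventAt_res hlam).1 x
  exact (LinearPMap.image_iff hx).1 (eq_add_of_sub_eq ((isResolventAt_res hlam).2.2 x hx)).symm

theorem res_apply_of_mem_graph (hlam : lam ∈ resolvSet S) {a b : E} (hab : (a, b) ∈ S.graph) :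
    res S lam b = a + lam • res S lam a := by
  simp only [LinearPMap.mem_graph_iff] at hab
  obtain ⟨y, rfl, rfl⟩ := hab
  have h := (isResolventAt_res hlam).2.1 y
  rw [map_sub, map_smul] at h
  exact eq_add_of_sub_eq h

theorem res_mem_graph_of_mem_graph (hlam : lam ∈ resolvSet S) {a b : E}
    (hab : (a, b) ∈ S.graph) : (res S lam a, res S lam b) ∈ S.graph := by
  simpa only [← res_apply_of_mem_graph hlam hab] using res_mem_graph hlam a

theorem res_eq_res_add_smul_comp (hlam : lam ∈ resolvSet S) (hmu : mu ∈ resolvSet S) :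
    res S mu = res S lam + (mu - lam) • (res S lam).comp (res S mu) := by
  ext x
  have h := res_apply_of_mem_graph hlam (res_mem_graph hmu x)
  simp only [map_add, map_smul] at h
  change _ = res S lam x + (mu - lam) • res S lam (res S mu x)
  linear_combination (norm := module) (-1 : ℂ) • h

theorem norm_res_sub_res_le (hlam : lam ∈ resolvSet S) (hmu : mu ∈ resolvSet S) {C : ℝ}
    (hCl : ‖res S lam‖ ≤ C) (hCm : ‖res S mu‖ ≤ C) :
    ‖res S mu - res S lam‖ ≤ C * C * ‖mu - lam‖ := by
  rw [res_eq_res_add_smul_comp hlam hmu, add_sub_cancel_left, norm_smul, mul_comm]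
  gcongr
  exact (ContinuousLinearMap.opNorm_comp_le _ _).trans
    (mul_le_mul hCl hCm (norm_nonneg _) ((norm_nonneg _).trans hCl))

/-- `S` need not be closed: `f = S⁻¹ ∘ g`, and the bounded `S⁻¹` commutes with the integral. -/
theorem integral_mem_graph {α : Type*} [MeasurableSpace α] {μ : Measure α}
    [CompleteSpace E] (h0 : (0 : ℂ) ∈ resolvSet S) {f g : α → E} (hg : Integrable g μ)
    (hfg : ∀ t, (f t, g t) ∈ S.graph) : (∫ t, f t ∂μ, ∫ t, g t ∂μ) ∈ S.graph := by
  have hf : ∀ t, f t = res S 0 (g t) := fun t => by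
    simpa using (res_apply_of_mem_graph h0 (hfg t)).symm
  simp_rw [hf, ContinuousLinearMap.integral_comp_comm _ hg]
  simpa using res_mem_graph h0 (∫ t, g t ∂μ)

end Resolvent

section SquareOperator

variable {S : E →ₗ.[ℂ] E} {a b c : E}

theorem memD2_iff_of_mem_graph (hab : (a, b) ∈ S.graph) : memD2 S a ↔ b ∈ S.domain := by
  have ha := LinearPMap.mem_domain_of_mem_graph hab
  rw [← LinearPMap.image_iff ha] at hab
  exact ⟨fun ⟨_, h⟩ => hab ▸ h, fun hb => ⟨ha, hab ▸ hb⟩⟩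

theorem sqApply_eq_of_mem_graph (hab : (a, b) ∈ S.graph) (hbc : (b, c) ∈ S.graph) :
    sqApply S a = c := by
  have hD2 : memD2 S a :=
    (memD2_iff_of_mem_graph hab).2 (LinearPMap.mem_domain_of_mem_graph hbc)
  rw [sqApply, dif_pos hD2]
  rw [← LinearPMap.image_iff hD2.1] at hab
  subst hab
  exact ((LinearPMap.image_iff _).2 hbc).symm

end SquareOperator

section VerticalLine

theorem norm_inv_le_inv_abs_im {z : ℂ} (hz : z.im ≠ 0) : ‖z⁻¹‖ ≤ |z.im|⁻¹ := by
  rw [norm_inv]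
  exact inv_anti₀ (abs_pos.2 hz) (abs_im_le_norm z)

theorem line_ne_zero {σ : ℝ} (hσ : σ ≠ 0) (t : ℝ) : (σ : ℂ) + t * I ≠ 0 := fun h =>
  hσ (by simpa using congrArg re h)

theorem continuous_line (σ : ℝ) : Continuous fun t : ℝ => (σ : ℂ) + t * I := by fun_prop

theorem tendsto_line_cocompact_cobounded (σ : ℝ) :
    Tendsto (fun t : ℝ => (σ : ℂ) + t * I) (cocompact ℝ) (Bornology.cobounded ℂ) := by
  rw [← tendsto_norm_atTop_iff_cobounded]
  refine tendsto_atTop_mono (fun t => ?_) tendsto_norm_cocompact_atTop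
  simpa using abs_im_le_norm ((σ : ℂ) + t * I)

theorem integrable_of_norm_le_div_rpow {F : Type*} [NormedAddCommGroup F] {f : ℝ → F}
    {s C : ℝ} (hs : 1 < s) (hf : Continuous f)
    (hbound : ∀ t : ℝ, 1 ≤ |t| → ‖f t‖ ≤ C / |t| ^ s) : Integrable f := by
  refine hf.locallyIntegrable.integrable_of_isBigO_cocompact
    (g := fun t : ℝ => (1 + ‖t‖) ^ (-s)) ?_
    ((integrable_one_add_norm (by simpa using hs)).integrableAtFilter _)
  refine IsBigO.of_bound (C * 2 ^ s) ?_
  filter_upwards [tendsto_norm_cocompact_atTop.eventually_ge_atTop 1] with t ht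
  rw [Real.norm_eq_abs] at ht
  have ht0 : 0 < |t| := one_pos.trans_le ht
  have hC : 0 ≤ C := by
    simpa using (le_div_iff₀ (by positivity)).1 ((norm_nonneg _).trans (hbound t ht))
  calc ‖f t‖ ≤ C / |t| ^ s := hbound t ht
    _ = C * 2 ^ s * (2 * |t|) ^ (-s) := by
        rw [Real.rpow_neg (by positivity), Real.mul_rpow zero_le_two ht0.le]
        field_simp
    _ ≤ C * 2 ^ s * (1 + |t|) ^ (-s) := by
        refine mul_le_mul_of_nonneg_left ?_ (by positivity)
        exact Real.rpow_le_rpow_of_nonpos (by positivity) (by linarith) (by linarith)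
    _ = C * 2 ^ s * ‖(1 + ‖t‖) ^ (-s)‖ := by
        rw [Real.norm_eq_abs, Real.norm_eq_abs, abs_of_nonneg (a := (1 + |t|) ^ (-s))]
        positivity

theorem norm_inv_sq_line_le (σ : ℝ) {t : ℝ} (ht : t ≠ 0) :
    ‖(((σ : ℂ) + t * I) ^ 2)⁻¹‖ ≤ 1 / |t| ^ (2 : ℝ) := by
  have h := norm_inv_le_inv_abs_im (z := (σ : ℂ) + t * I) (by simpa using ht)
  simp only [add_im, ofReal_im, mul_im, ofReal_re, I_im, mul_one, I_re, mul_zero, zero_add,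
    add_zero] at h
  rw [Real.rpow_two, one_div, ← inv_pow, ← inv_pow, norm_pow]
  gcongr

theorem integrable_inv_sq_line {σ : ℝ} (hσ : σ ≠ 0) :
    Integrable fun t : ℝ => (((σ : ℂ) + t * I) ^ 2)⁻¹ :=
  integrable_of_norm_le_div_rpow one_lt_two
    ((continuous_line σ).pow 2 |>.inv₀ fun t => pow_ne_zero 2 (line_ne_zero hσ t))
    fun _ ht => norm_inv_sq_line_le σ (abs_pos.1 (one_pos.trans_le ht))

theorem integral_inv_sq_line {σ : ℝ} (hσ : σ ≠ 0) :
    ∫ t : ℝ, (((σ : ℂ) + t * I) ^ 2)⁻¹ = 0 := by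
  have hderiv : ∀ t : ℝ, HasDerivAt (fun u : ℝ => I * ((σ : ℂ) + u * I)⁻¹)
      ((((σ : ℂ) + t * I) ^ 2)⁻¹) t := fun t => by
    refine ((((hasDerivAt_id t).ofReal_comp.mul_const I).const_add (σ : ℂ)).inv
      (line_ne_zero hσ t) |>.const_mul I).congr_deriv ?_
    simp only [id, ofReal_one, one_mul, mul_neg, ← mul_div_assoc, I_mul_I, neg_neg, one_div]
  have hlim := ((tendsto_inv₀_cobounded.comp (tendsto_line_cocompact_cobounded σ)).const_mul I)
  rw [mul_zero] at hlim
  simpa using integral_of_hasDerivAt_of_tendsto hderiv (integrable_inv_sq_line hσ)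
    (hlim.mono_left atBot_le_cocompact) (hlim.mono_left atTop_le_cocompact)

end VerticalLine

section Strip

variable {S : E →ₗ.[ℂ] E} {M β h M₀ : ℝ}

theorem CondH.zero_mem_resolvSet (hH : CondH S h M₀) : (0 : ℂ) ∈ resolvSet S :=
  (hH.2 0 (by simpa using hH.1.le)).1

theorem CondH.bound_nonneg (hH : CondH S h M₀) : 0 ≤ M₀ :=
  (norm_nonneg _).trans (hH.2 0 (by simpa using hH.1.le)).2

theorem CondH.abs_le (hH : CondH S h M₀) : |h| ≤ h := (abs_of_pos hH.1).le

theorem CondH.abs_neg_le (hH : CondH S h M₀) : |-h| ≤ h := by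
  rw [abs_neg]
  exact hH.abs_le

theorem CondH.line_mem (hH : CondH S h M₀) {σ : ℝ} (hσ : |σ| ≤ h) (t : ℝ) :
    (σ : ℂ) + t * I ∈ resolvSet S ∧ ‖res S ((σ : ℂ) + t * I)‖ ≤ M₀ :=
  hH.2 _ (by simpa using hσ)

theorem CondH.lipschitzOnWith_res (hH : CondH S h M₀) :
    LipschitzOnWith (M₀ * M₀).toNNReal (res S) {z | |z.re| ≤ h} := by
  refine LipschitzOnWith.of_dist_le_mul fun z hz w hw => ?_
  rw [dist_eq_norm, dist_eq_norm, Real.coe_toNNReal _ (mul_nonneg hH.bound_nonneg hH.bound_nonneg)]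
  exact norm_res_sub_res_le (hH.2 w hw).1 (hH.2 z hz).1 (hH.2 w hw).2 (hH.2 z hz).2

theorem CondH.continuous_res_line (hH : CondH S h M₀) {σ : ℝ} (hσ : |σ| ≤ h) :
    Continuous fun t : ℝ => res S ((σ : ℂ) + t * I) :=
  hH.lipschitzOnWith_res.continuousOn.comp_continuous (continuous_line σ)
    fun t => by simpa using hσ

theorem AlmostBisectorial.norm_res_le (hab : AlmostBisectorial S M β) (hH : CondH S h M₀)
    {z : ℂ} (hz : |z.re| ≤ h) (him : z.im ≠ 0) :
    ‖res S z‖ ≤ M * (1 + h * M₀) / |z.im| ^ β := by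
  set w : ℂ := z.im * I
  have hw : w.re = 0 ∧ w ≠ 0 := by simp [w, him]
  obtain ⟨hwρ, hwM⟩ := hab.2.2.2 w hw.1 hw.2
  obtain ⟨hzρ, hzM⟩ := hH.2 z hz
  have hnorm_w : ‖w‖ = |z.im| := by simp [w]
  have hzw : z - w = z.re := by
    apply Complex.ext <;> simp [w]
  rw [hnorm_w] at hwM
  calc ‖res S z‖ = ‖res S w + (z.re : ℂ) • (res S w).comp (res S z)‖ := by
        rw [← hzw, ← res_eq_res_add_smul_comp hwρ hzρ]
    _ ≤ ‖res S w‖ + |z.re| * (‖res S w‖ * ‖res S z‖) := by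
        refine (norm_add_le _ _).trans ?_
        rw [norm_smul, norm_real, Real.norm_eq_abs]
        gcongr
        exact ContinuousLinearMap.opNorm_comp_le _ _
    _ ≤ M / |z.im| ^ β + h * (M / |z.im| ^ β * M₀) := by
        have : 0 ≤ M / |z.im| ^ β := by have := hab.1; positivity
        gcongr
        exact hH.1.le
    _ = M * (1 + h * M₀) / |z.im| ^ β := by ring

theorem integrable_inv_sq_smul_res_line (hH : CondH S h M₀) {σ : ℝ} (hσ : |σ| ≤ h)
    (hσ0 : σ ≠ 0) :
    Integrable fun t : ℝ => (((σ : ℂ) + t * I) ^ 2)⁻¹ • res S ((σ : ℂ) + t * I) := by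
  refine integrable_of_norm_le_div_rpow (C := M₀) one_lt_two
    ((((continuous_line σ).pow 2).inv₀ fun t => pow_ne_zero 2 (line_ne_zero hσ0 t)).smul
      (hH.continuous_res_line hσ)) fun t ht => ?_
  rw [norm_smul]
  calc _ ≤ 1 / |t| ^ (2 : ℝ) * M₀ :=
        mul_le_mul (norm_inv_sq_line_le σ (abs_pos.1 (one_pos.trans_le ht)))
          (hH.line_mem hσ t).2 (norm_nonneg _) (by positivity)
    _ = M₀ / |t| ^ (2 : ℝ) := by ring

theorem integrable_inv_smul_res_line (hab : AlmostBisectorial S M β) (hH : CondH S h M₀)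
    {σ : ℝ} (hσ : |σ| ≤ h) (hσ0 : σ ≠ 0) :
    Integrable fun t : ℝ => ((σ : ℂ) + t * I)⁻¹ • res S ((σ : ℂ) + t * I) := by
  refine integrable_of_norm_le_div_rpow (C := M * (1 + h * M₀)) (lt_add_of_pos_right 1 hab.2.1)
    (((continuous_line σ).inv₀ (line_ne_zero hσ0)).smul (hH.continuous_res_line hσ))
    fun t ht => ?_
  have ht0 : 0 < |t| := one_pos.trans_le ht
  have hz : ((σ : ℂ) + t * I).im ≠ 0 := by simpa using ht0.ne'
  have hinv := norm_inv_le_inv_abs_im hz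
  have hres := hab.norm_res_le hH (by simpa using hσ) hz
  simp only [add_im, ofReal_im, mul_im, ofReal_re, I_im, mul_one, I_re, mul_zero, zero_add,
    add_zero] at hinv hres
  rw [norm_smul, Real.rpow_add ht0, Real.rpow_one]
  calc _ ≤ |t|⁻¹ * (M * (1 + h * M₀) / |t| ^ β) := by
        gcongr
    _ = M * (1 + h * M₀) / (|t| * |t| ^ β) := by
        field_simp

theorem smul_integral_smul_apply {g : ℝ → ℂ} {F : ℝ → E →L[ℂ] E}
    (hF : Integrable fun t => g t • F t) (c : ℂ) (x : E) :
    (c • ∫ t, g t • F t) x = c • ∫ t, g t • F t x := by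
  rw [smul_apply, ContinuousLinearMap.integral_apply hF]
  rfl

theorem Aplus_apply (hH : CondH S h M₀) (x : E) :
    Aplus S h x = (2 * (Real.pi : ℂ))⁻¹ •
      ∫ t : ℝ, (((h : ℂ) + t * I) ^ 2)⁻¹ • res S ((h : ℂ) + t * I) x :=
  smul_integral_smul_apply (integrable_inv_sq_smul_res_line hH hH.abs_le hH.1.ne') _ x

theorem Bplus_apply (hab : AlmostBisectorial S M β) (hH : CondH S h M₀) (x : E) :
    Bplus S h x = (2 * (Real.pi : ℂ))⁻¹ •
      ∫ t : ℝ, ((h : ℂ) + t * I)⁻¹ • res S ((h : ℂ) + t * I) x :=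
  smul_integral_smul_apply (integrable_inv_smul_res_line hab hH hH.abs_le hH.1.ne') _ x

theorem Aminus_apply (hH : CondH S h M₀) (x : E) :
    Aminus S h x = -(2 * (Real.pi : ℂ))⁻¹ •
      ∫ t : ℝ, ((-(h : ℂ) + t * I) ^ 2)⁻¹ • res S (-(h : ℂ) + t * I) x := by
  have hint := integrable_inv_sq_smul_res_line hH hH.abs_neg_le (neg_ne_zero.2 hH.1.ne')
  push_cast at hint
  exact smul_integral_smul_apply hint _ x

theorem Bminus_apply (hab : AlmostBisectorial S M β) (hH : CondH S h M₀) (x : E) :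
    Bminus S h x = -(2 * (Real.pi : ℂ))⁻¹ •
      ∫ t : ℝ, (-(h : ℂ) + t * I)⁻¹ • res S (-(h : ℂ) + t * I) x := by
  have hint := integrable_inv_smul_res_line hab hH hH.abs_neg_le (neg_ne_zero.2 hH.1.ne')
  push_cast at hint
  exact smul_integral_smul_apply hint _ x

end Strip

section LineIntegrals

variable {S : X →ₗ.[ℂ] X} {M β h M₀ σ : ℝ}

theorem integral_inv_sq_smul_res_line_mem_graph (hab : AlmostBisectorial S M β)
    (hH : CondH S h M₀) (hσ : |σ| ≤ h) (hσ0 : σ ≠ 0) (x : X) :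
    (∫ t : ℝ, (((σ : ℂ) + t * I) ^ 2)⁻¹ • res S ((σ : ℂ) + t * I) x,
      ∫ t : ℝ, ((σ : ℂ) + t * I)⁻¹ • res S ((σ : ℂ) + t * I) x) ∈ S.graph := by
  have hint : Integrable fun t : ℝ => ((σ : ℂ) + t * I)⁻¹ • res S ((σ : ℂ) + t * I) x :=
    (integrable_inv_smul_res_line hab hH hσ hσ0).apply_continuousLinearMap x
  have hsum : Integrable fun t : ℝ =>
      (((σ : ℂ) + t * I) ^ 2)⁻¹ • x + ((σ : ℂ) + t * I)⁻¹ • res S ((σ : ℂ) + t * I) x :=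
    (integrable_inv_sq_line hσ0).smul_const x |>.add hint
  have key := integral_mem_graph hH.zero_mem_resolvSet hsum
    (f := fun t : ℝ => (((σ : ℂ) + t * I) ^ 2)⁻¹ • res S ((σ : ℂ) + t * I) x) fun t => by
    have hcoef : (((σ : ℂ) + t * I) ^ 2)⁻¹ * ((σ : ℂ) + t * I) = ((σ : ℂ) + t * I)⁻¹ := by
      field_simp [line_ne_zero hσ0 t]
    convert S.graph.smul_mem (((σ : ℂ) + t * I) ^ 2)⁻¹ (res_mem_graph (hH.line_mem hσ t).1 x)
      using 1
    simp only [Prod.smul_mk, smul_add, smul_smul, hcoef]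
  rwa [integral_add ((integrable_inv_sq_line hσ0).smul_const x) hint, integral_smul_const,
    integral_inv_sq_line hσ0, zero_smul, zero_add] at key

theorem integral_inv_smul_res_line_mem_graph (hab : AlmostBisectorial S M β)
    (hH : CondH S h M₀) (hσ : |σ| ≤ h) (hσ0 : σ ≠ 0) {x y : X} (hxy : (x, y) ∈ S.graph) :
    (∫ t : ℝ, ((σ : ℂ) + t * I)⁻¹ • res S ((σ : ℂ) + t * I) x,
      ∫ t : ℝ, ((σ : ℂ) + t * I)⁻¹ • res S ((σ : ℂ) + t * I) y) ∈ S.graph :=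
  integral_mem_graph hH.zero_mem_resolvSet
    ((integrable_inv_smul_res_line hab hH hσ hσ0).apply_continuousLinearMap y) fun _ =>
    S.graph.smul_mem _ (res_mem_graph_of_mem_graph (hH.line_mem hσ _).1 hxy)

theorem Aplus_Bplus_mem_graph (hab : AlmostBisectorial S M β) (hH : CondH S h M₀) (x : X) :
    (Aplus S h x, Bplus S h x) ∈ S.graph := by
  rw [Aplus_apply hH, Bplus_apply hab hH]
  exact S.graph.smul_mem _
    (integral_inv_sq_smul_res_line_mem_graph hab hH hH.abs_le hH.1.ne' x)

theorem Aminus_Bminus_mem_graph (hab : AlmostBisectorial S M β) (hH : CondH S h M₀) (x : X) :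
    (Aminus S h x, Bminus S h x) ∈ S.graph := by
  have key := integral_inv_sq_smul_res_line_mem_graph hab hH hH.abs_neg_le
    (neg_ne_zero.2 hH.1.ne') x
  push_cast at key
  rw [Aminus_apply hH, Bminus_apply hab hH]
  exact S.graph.smul_mem _ key

theorem Bplus_mem_graph (hab : AlmostBisectorial S M β) (hH : CondH S h M₀) {x y : X}
    (hxy : (x, y) ∈ S.graph) : (Bplus S h x, Bplus S h y) ∈ S.graph := by
  rw [Bplus_apply hab hH, Bplus_apply hab hH]
  exact S.graph.smul_mem _
    (integral_inv_smul_res_line_mem_graph hab hH hH.abs_le hH.1.ne' hxy)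

theorem Bminus_mem_graph (hab : AlmostBisectorial S M β) (hH : CondH S h M₀) {x y : X}
    (hxy : (x, y) ∈ S.graph) : (Bminus S h x, Bminus S h y) ∈ S.graph := by
  have key := integral_inv_smul_res_line_mem_graph hab hH hH.abs_neg_le
    (neg_ne_zero.2 hH.1.ne') hxy
  push_cast at key
  rw [Bminus_apply hab hH, Bminus_apply hab hH]
  exact S.graph.smul_mem _ key

end LineIntegrals

/-- for an almost bisectorial operator, `P± = S B±`, so
`D(S) ⊆ D(P±)` and the simplified integral representation holds on `D(S)`. -/
theorem statement12 (S : X →ₗ.[ℂ] X) (M β : ℝ) (hab : AlmostBisectorial S M β)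
    (h M₀ : ℝ) (hH : CondH S h M₀) :
    -- P± = S B±
    (∀ x : X, memD2 S (Aplus S h x) ↔ Bplus S h x ∈ S.domain) ∧
    (∀ x : X, memD2 S (Aminus S h x) ↔ Bminus S h x ∈ S.domain) ∧
    (∀ (x : X) (hx : Bplus S h x ∈ S.domain),
      sqApply S (Aplus S h x) = S ⟨Bplus S h x, hx⟩) ∧
    (∀ (x : X) (hx : Bminus S h x ∈ S.domain),
      sqApply S (Aminus S h x) = S ⟨Bminus S h x, hx⟩) ∧
    -- D(S) ⊆ D(P±) and the integral representation on D(S)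
    (∀ (x : X) (hx : x ∈ S.domain),
      memD2 S (Aplus S h x) ∧ memD2 S (Aminus S h x) ∧
      sqApply S (Aplus S h x) = (2 * (Real.pi : ℂ))⁻¹ •
        ∫ t : ℝ, ((h : ℂ) + (t : ℂ) * Complex.I)⁻¹ •
          res S ((h : ℂ) + (t : ℂ) * Complex.I) (S ⟨x, hx⟩) ∧
      sqApply S (Aminus S h x) = -(2 * (Real.pi : ℂ))⁻¹ •
        ∫ t : ℝ, (-(h : ℂ) + (t : ℂ) * Complex.I)⁻¹ •
          res S (-(h : ℂ) + (t : ℂ) * Complex.I) (S ⟨x, hx⟩)) := by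
  have hABp := Aplus_Bplus_mem_graph hab hH
  have hABm := Aminus_Bminus_mem_graph hab hH
  refine ⟨fun x => memD2_iff_of_mem_graph (hABp x), fun x => memD2_iff_of_mem_graph (hABm x),
    fun x hx => sqApply_eq_of_mem_graph (hABp x) (S.mem_graph ⟨_, hx⟩),
    fun x hx => sqApply_eq_of_mem_graph (hABm x) (S.mem_graph ⟨_, hx⟩), fun x hx => ?_⟩
  have hBp := Bplus_mem_graph hab hH (S.mem_graph ⟨x, hx⟩)
  have hBm := Bminus_mem_graph hab hH (S.mem_graph ⟨x, hx⟩)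
  rw [← Bplus_apply hab hH, ← Bminus_apply hab hH]
  exact ⟨(memD2_iff_of_mem_graph (hABp x)).2 (LinearPMap.mem_domain_of_mem_graph hBp),
    (memD2_iff_of_mem_graph (hABm x)).2 (LinearPMap.mem_domain_of_mem_graph hBm),
    sqApply_eq_of_mem_graph (hABp x) hBp, sqApply_eq_of_mem_graph (hABm x) hBm⟩

end
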